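/- Let s > 1 be a real number and define the sequence a by a_n = (1+n)/(s+n). Then for all integers m ≥ 1 and n ≥ 0, (∇ᵐ a)_n = (1−s)·m! / ∏_{i=0}^{m} (s+n+i); in particular (∇ᵐ a)_n < 0 for all m ≥ 1 and n ≥ 0, so a is completely alternating. (Hence the weighted shift with weights squared a_n, i.e., with Berger measure (s−1)(1−t)^{s−2} dt on [0,1], is moment infinitely divisible.) -/

import Mathlib

/-- The `m`-th iterated forward difference of a sequence, evaluated at `k`. -/
noncomputable def fdiff (a : ℕ → ℝ) (m k : ℕ) : ℝ :=
  ∑ i ∈ Finset.range (m + 1), (-1 : ℝ) ^ i * (m.choose i : ℝ) * a (k + i)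

/-!
Writing `a j = 1 + (1 - s) / (s + j)`, the constant term is killed by every difference of
order `m ≥ 1`, and the differences of `j ↦ (c + j)⁻¹` telescope: the `(m+1)`-st one is
`m! / P(n) - m! / P(n+1)` with `P(n) = (c + n) ⋯ (c + n + m)`, and the two products share all
factors but `c + n` and `c + n + m + 1`, whose difference `m + 1` upgrades `m!` to `(m+1)!`.
-/

open Finset fwdDiff

theorem fdiff_eq_neg_one_pow_mul_fwdDiff_iter (a : ℕ → ℝ) (m k : ℕ) :
    fdiff a m k = (-1) ^ m * (Δ_[1])^[m] a k := by
  rw [fwdDiff_iter_eq_sum_shift, fdiff, mul_sum]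
  refine sum_congr rfl fun i hi => ?_
  have hsign : (-1 : ℝ) ^ m * (-1) ^ (m - i) = (-1) ^ i := by
    have hi : i ≤ m := mem_range_succ_iff.mp hi
    rw [← pow_add, show m + (m - i) = i + 2 * (m - i) by omega, pow_add, pow_mul]
    simp
  rw [zsmul_eq_mul, smul_eq_mul, mul_one, ← hsign]
  push_cast
  ring

theorem fwdDiff_iter_const {M G : Type*} [AddCommMonoid M] [AddCommGroup G] (h : M) (g : G)
    {n : ℕ} (hn : n ≠ 0) : (Δ_[h])^[n] (fun _ : M => g) = 0 := by
  obtain ⟨n, rfl⟩ := Nat.exists_eq_succ_of_ne_zero hn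
  rw [Function.iterate_succ_apply, fwdDiff_const]
  exact Function.iterate_fixed (fwdDiff_const h 0) n

theorem fwdDiff_iter_inv_add {c : ℝ} (hc : ∀ j : ℕ, c + j ≠ 0) (m n : ℕ) :
    (Δ_[1])^[m] (fun j : ℕ => (c + j)⁻¹) n
      = (-1) ^ m * (m.factorial : ℝ) / ∏ i ∈ range (m + 1), (c + n + i) := by
  induction m generalizing n with
  | zero => simp
  | succ m ih =>
    have hne : ∀ i : ℕ, c + n + i ≠ 0 := fun i => by simpa [add_assoc] using hc (n + i)
    have hshift : ∏ i ∈ range (m + 1), (c + ↑(n + 1) + i)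
        = ∏ i ∈ range (m + 1), (c + n + ↑(i + 1)) :=
      prod_congr rfl fun i _ => by push_cast; ring
    have hinner : ∏ i ∈ range m, (c + n + ↑(i + 1)) ≠ 0 :=
      prod_ne_zero_iff.mpr fun i _ => hne _
    have hfirst := hne 0
    have hlast := hne (m + 1)
    rw [Function.iterate_succ_apply', fwdDiff, ih, ih, hshift, Nat.factorial_succ,
      prod_range_succ' (fun i : ℕ => c + n + i), prod_range_succ (fun i : ℕ => c + n + i),
      prod_range_succ (fun i : ℕ => c + n + ↑(i + 1)), prod_range_succ' (fun i : ℕ => c + n + i)]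
    push_cast at hfirst hlast hinner ⊢
    field_simp
    ring

theorem stmt19 (s : ℝ) (hs : 1 < s) :
    ∀ m : ℕ, 1 ≤ m → ∀ n : ℕ,
      fdiff (fun j => (1 + (j : ℝ)) / (s + j)) m n
          = (1 - s) * (Nat.factorial m : ℝ) /
              ∏ i ∈ Finset.range (m + 1), (s + n + i) ∧
      fdiff (fun j => (1 + (j : ℝ)) / (s + j)) m n < 0 := by
  intro m hm n
  have hpos : ∀ x : ℝ, 0 ≤ x → 0 < s + x := fun x hx => by linarith
  have hsplit : (fun j : ℕ => (1 + (j : ℝ)) / (s + j))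
      = (fun _ => 1) + (1 - s) • fun j : ℕ => (s + j)⁻¹ := by
    funext j
    have hj := hpos j j.cast_nonneg
    simp only [Pi.add_apply, Pi.smul_apply, smul_eq_mul]
    field_simp
    ring
  have hformula : fdiff (fun j => (1 + (j : ℝ)) / (s + j)) m n
      = (1 - s) * (Nat.factorial m : ℝ) / ∏ i ∈ Finset.range (m + 1), (s + n + i) := by
    have hsq : (-1 : ℝ) ^ m * (-1) ^ m = 1 := by rw [← mul_pow]; norm_num
    rw [fdiff_eq_neg_one_pow_mul_fwdDiff_iter, hsplit, fwdDiff_iter_add, fwdDiff_iter_const_smul,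
      fwdDiff_iter_const _ _ (by omega), Pi.add_apply, Pi.zero_apply, Pi.smul_apply,
      fwdDiff_iter_inv_add fun j => (hpos j j.cast_nonneg).ne']
    linear_combination (1 - s) * (Nat.factorial m : ℝ) / (∏ i ∈ range (m + 1), (s + n + i)) * hsq
  refine ⟨hformula, hformula ▸ div_neg_of_neg_of_pos ?_ ?_⟩
  · exact mul_neg_of_neg_of_pos (by linarith) (by positivity)
  · exact prod_pos fun i _ => add_pos_of_pos_of_nonneg (hpos n n.cast_nonneg) i.cast_nonneg
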